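/- Let t ≥ 1 and let n be a multiple of 2t with n ≥ 4t. Let w = (10)^t 1^{2t} c₁ c₂ … c_{(n−4t)/(2t)}, where each c_i is an arbitrary Catalan sequence of length 2t. Then the prefix normal form of w is w̃ = 1^{2t} (01)^{(n−2t)/2}; equivalently, the profile of w satisfies f_w(k) = min(k, t + ⌊k/2⌋) for all 0 ≤ k ≤ n. -/

import Mathlib

/-!
Write `P x` for the number of ones in the prefix of length `x`, so that a window `[j, j + k)`
holds `P (j + k) - P j` ones. Along `w = (10)^t 1^{2t} c₁ ⋯` the quantity `2 P x - x` starts in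
`[0, 1]` on the alternating block, climbs to `2t` on the block of ones, and stays in `[0, 2t]`
on the Catalan blocks, returning to `2t` at every block boundary. Hence every window of length
`k` has at most `min k (t + ⌊k/2⌋)` ones. The bound is attained inside `1^{2t}` when `k ≤ 2t`,
and otherwise by a window starting in the alternating block and ending at a block boundary.
-/

/-- Number of ones of the infinite binary word `w` in the 0-indexed
half-open interval of positions `[a, b)`. Thus `cnt w j (j+k)` is the number
of 1s in the subword `w[j+1, j+k]` (1-indexed), and `cnt w 0 k` is the number
of 1s in the prefix of length `k`. -/
def cnt (w : ℕ → Bool) (a b : ℕ) : ℕ :=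
  ((Finset.Ico a b).filter (fun i => w i = true)).card

/-- Extend a finite binary word (a list, `true = 1`, `false = 0`) to an
infinite word by `false`s. -/
def extL (l : List Bool) : ℕ → Bool :=
  fun i => l.getD i false

/-- The profile `f_w(k)` of a word of length `n`: the maximum number of 1s in
any subword of length `k`, i.e. `max_{0 ≤ j ≤ n-k} |w[j+1, j+k]|₁`. -/
def profile (n : ℕ) (w : ℕ → Bool) (k : ℕ) : ℕ :=
  (Finset.range (n - k + 1)).sup (fun j => cnt w j (j + k))

/-- A Catalan sequence of length `2t`: a binary word `c` of length `2t` with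
`|c[1,i]|₁ ≤ i/2` for all `i = 1, …, 2t` and `|c|₁ = t`. -/
def IsCatalanSeq (t : ℕ) (c : List Bool) : Prop :=
  c.length = 2 * t ∧ (∀ i : ℕ, i ≤ 2 * t → 2 * cnt (extL c) 0 i ≤ i) ∧
    cnt (extL c) 0 (2 * t) = t

lemma cnt_self (w : ℕ → Bool) (a : ℕ) : cnt w a a = 0 := by
  simp [cnt]

lemma cnt_le_sub (w : ℕ → Bool) (a b : ℕ) : cnt w a b ≤ b - a :=
  (Finset.card_filter_le _ _).trans (Nat.card_Ico a b).le

lemma cnt_add_cnt (w : ℕ → Bool) {a b c : ℕ} (hab : a ≤ b) (hbc : b ≤ c) :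
    cnt w a b + cnt w b c = cnt w a c := by
  rw [cnt, cnt, cnt, ← Finset.Ico_union_Ico_eq_Ico hab hbc, Finset.filter_union,
    Finset.card_union_of_disjoint]
  exact (Finset.Ico_disjoint_Ico_consecutive a b c).mono
    (Finset.filter_subset _ _) (Finset.filter_subset _ _)

lemma cnt_succ (w : ℕ → Bool) {a b : ℕ} (h : a ≤ b) :
    cnt w a (b + 1) = cnt w a b + if w b then 1 else 0 := by
  rw [← cnt_add_cnt w h b.le_succ]
  congr 1
  cases hb : w b <;> simp [cnt, Finset.filter_singleton, hb]

lemma cnt_extL_eq_count_take (l : List Bool) (m : ℕ) :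
    cnt (extL l) 0 m = (l.take m).count true := by
  induction m with
  | zero => simp [cnt_self]
  | succ m ih =>
    rw [cnt_succ _ m.zero_le, ih, List.take_add_one, List.count_append]
    rcases h : l[m]? with _ | _ | _ <;> simp [extL, List.getD, h]

lemma cnt_extL_append (l r : List Bool) (m : ℕ) :
    cnt (extL (l ++ r)) 0 m = cnt (extL l) 0 m + cnt (extL r) 0 (m - l.length) := by
  simp only [cnt_extL_eq_count_take, List.take_append, List.count_append]

lemma cnt_extL_replicate_true (L m : ℕ) :
    cnt (extL (List.replicate L true)) 0 m = min m L := by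
  simp [cnt_extL_eq_count_take, List.take_replicate]

lemma cnt_extL_alternating (t m : ℕ) :
    cnt (extL (List.replicate t [true, false]).flatten) 0 m = (min m (2 * t) + 1) / 2 := by
  induction t generalizing m with
  | zero => simp [cnt_extL_eq_count_take]
  | succ t ih =>
    rw [List.replicate_succ, List.flatten_cons, cnt_extL_append, ih]
    rcases m with _ | _ | m <;> simp [cnt_extL_eq_count_take] <;> omega

namespace IsCatalanSeq

variable {t : ℕ} {c : List Bool}

lemma cnt_of_le (hc : IsCatalanSeq t c) {m : ℕ} (hm : 2 * t ≤ m) : cnt (extL c) 0 m = t := by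
  rw [← hc.2.2, cnt_extL_eq_count_take, cnt_extL_eq_count_take,
    List.take_of_length_le (hc.1 ▸ hm), List.take_of_length_le hc.1.le]

lemma two_mul_cnt_le (hc : IsCatalanSeq t c) (m : ℕ) : 2 * cnt (extL c) 0 m ≤ m := by
  rcases le_or_gt m (2 * t) with hm | hm
  · exact hc.2.1 m hm
  · rw [hc.cnt_of_le hm.le]
    omega

end IsCatalanSeq

section CatalanFlatten

variable {t : ℕ}

lemma two_mul_cnt_flatten_le {cs : List (List Bool)} (hcs : ∀ c ∈ cs, IsCatalanSeq t c)
    (m : ℕ) : 2 * cnt (extL cs.flatten) 0 m ≤ m := by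
  induction cs generalizing m with
  | nil => simp [cnt_extL_eq_count_take]
  | cons c cs ih =>
    have hc := hcs c List.mem_cons_self
    have hrest := ih (fun c h => hcs c (List.mem_cons_of_mem _ h)) (m - 2 * t)
    rw [List.flatten_cons, cnt_extL_append, hc.1]
    rcases le_or_gt m (2 * t) with hm | hm
    · have := hc.two_mul_cnt_le m
      omega
    · rw [hc.cnt_of_le hm.le]
      omega

lemma le_two_mul_cnt_flatten_add {cs : List (List Bool)} (hcs : ∀ c ∈ cs, IsCatalanSeq t c)
    {m : ℕ} (hm : m ≤ 2 * t * cs.length) : m ≤ 2 * cnt (extL cs.flatten) 0 m + 2 * t := by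
  induction cs generalizing m with
  | nil => simp_all
  | cons c cs ih =>
    have hc := hcs c List.mem_cons_self
    rw [List.flatten_cons, cnt_extL_append, hc.1]
    rcases le_or_gt m (2 * t) with hm' | hm'
    · omega
    · have hrest := ih (fun c h => hcs c (List.mem_cons_of_mem _ h)) (m := m - 2 * t)
        (by rw [List.length_cons, Nat.mul_succ] at hm; omega)
      rw [hc.cnt_of_le hm'.le]
      omega

lemma two_mul_cnt_flatten_of_dvd {cs : List (List Bool)} (hcs : ∀ c ∈ cs, IsCatalanSeq t c)
    {m : ℕ} (hdvd : 2 * t ∣ m) (hm : m ≤ 2 * t * cs.length) :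
    2 * cnt (extL cs.flatten) 0 m = m := by
  induction cs generalizing m with
  | nil => simp_all [cnt_self]
  | cons c cs ih =>
    have hc := hcs c List.mem_cons_self
    rcases lt_or_ge m (2 * t) with hm' | hm'
    · rw [Nat.eq_zero_of_dvd_of_lt hdvd hm', cnt_self]
    · have hrest := ih (fun c h => hcs c (List.mem_cons_of_mem _ h))
        (Nat.dvd_sub hdvd dvd_rfl) (by rw [List.length_cons, Nat.mul_succ] at hm; omega)
      rw [List.flatten_cons, cnt_extL_append, hc.1, hc.cnt_of_le hm']
      omega

end CatalanFlatten

lemma cnt_le_profile {n j k : ℕ} (w : ℕ → Bool) (h : j + k ≤ n) :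
    cnt w j (j + k) ≤ profile n w k :=
  Finset.le_sup (f := fun j => cnt w j (j + k)) (Finset.mem_range.2 (by omega))

lemma profile_le_of_two_mul_cnt_mem_Icc {n s : ℕ} {w : ℕ → Bool}
    (hbounds : ∀ x ≤ n, 2 * cnt w 0 x ∈ Finset.Icc x (2 * s + x)) {k : ℕ} (hk : k ≤ n) :
    profile n w k ≤ min k (s + k / 2) := by
  refine Finset.sup_le fun j hj => ?_
  rw [Finset.mem_range] at hj
  have hsplit := cnt_add_cnt w j.zero_le (j.le_add_right k)
  have hprefix := Finset.mem_Icc.1 (hbounds j (by omega))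
  have hwindow := Finset.mem_Icc.1 (hbounds (j + k) (by omega))
  have hlength := cnt_le_sub w j (j + k)
  omega

lemma exists_dvd_le_lt_add {d : ℕ} (hd : 0 < d) (k : ℕ) : ∃ M, d ∣ M ∧ k ≤ M ∧ M < k + d := by
  refine ⟨(k + d - 1) / d * d, dvd_mul_left _ _, ?_, ?_⟩
  · have := Nat.lt_div_mul_add (a := k + d - 1) hd
    omega
  · have := Nat.div_mul_le_self (k + d - 1) d
    omega

def catalanConstruction (t : ℕ) (cs : List (List Bool)) : List Bool :=
  (List.replicate t [true, false]).flatten ++ List.replicate (2 * t) true ++ cs.flatten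

lemma cnt_catalanConstruction (t : ℕ) (cs : List (List Bool)) (x : ℕ) :
    cnt (extL (catalanConstruction t cs)) 0 x =
      (min x (2 * t) + 1) / 2 + min (x - 2 * t) (2 * t) + cnt (extL cs.flatten) 0 (x - 4 * t) := by
  have hlen : (List.replicate t [true, false]).flatten.length = 2 * t := by simp [mul_comm]
  rw [catalanConstruction, cnt_extL_append, cnt_extL_append, cnt_extL_alternating,
    cnt_extL_replicate_true, List.length_append, hlen, List.length_replicate,
    show 2 * t + 2 * t = 4 * t by ring]

section CatalanConstruction

variable {t : ℕ} {cs : List (List Bool)}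

lemma two_mul_cnt_catalanConstruction_mem_Icc (hcs : ∀ c ∈ cs, IsCatalanSeq t c) (x : ℕ)
    (hx : x ≤ 2 * t * (cs.length + 2)) :
    2 * cnt (extL (catalanConstruction t cs)) 0 x ∈ Finset.Icc x (2 * t + x) := by
  have hupper := two_mul_cnt_flatten_le hcs (x - 4 * t)
  have hlower := le_two_mul_cnt_flatten_add hcs (m := x - 4 * t) (by rw [mul_add] at hx; omega)
  rw [cnt_catalanConstruction, Finset.mem_Icc]
  omega

lemma two_mul_cnt_catalanConstruction_of_dvd (hcs : ∀ c ∈ cs, IsCatalanSeq t c) {M : ℕ}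
    (hdvd : 2 * t ∣ M) (h4t : 4 * t ≤ M) (hM : M ≤ 2 * t * (cs.length + 2)) :
    2 * cnt (extL (catalanConstruction t cs)) 0 M = 2 * t + M := by
  have hblocks := two_mul_cnt_flatten_of_dvd hcs (m := M - 4 * t) (Nat.dvd_sub hdvd ⟨2, by ring⟩)
    (by rw [mul_add] at hM; omega)
  rw [cnt_catalanConstruction]
  omega

lemma le_profile_catalanConstruction (hcs : ∀ c ∈ cs, IsCatalanSeq t c) {k : ℕ}
    (hk : k ≤ 2 * t * (cs.length + 2)) :
    min k (t + k / 2) ≤ profile (2 * t * (cs.length + 2)) (extL (catalanConstruction t cs)) k := by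
  set w := extL (catalanConstruction t cs)
  set N := 2 * t * (cs.length + 2) with hN
  have hN4t : 4 * t ≤ N := by rw [hN, mul_add]; omega
  rcases le_or_gt k (2 * t) with hk2t | hk2t
  · have hwindow := cnt_le_profile (n := N) (k := k) w (j := 2 * t) (by omega)
    have hsplit := cnt_add_cnt w (2 * t).zero_le ((2 * t).le_add_right k)
    rw [cnt_catalanConstruction, cnt_catalanConstruction] at hsplit
    have hstart := two_mul_cnt_flatten_le hcs (2 * t - 4 * t)
    have hend := two_mul_cnt_flatten_le hcs (2 * t + k - 4 * t)
    omega
  · have ht : 0 < t := Nat.pos_of_ne_zero fun ht => by simp [hN, ht] at hk; omega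
    obtain ⟨M, hdvd, hkM, hMk⟩ := exists_dvd_le_lt_add (by omega : 0 < 2 * t) k
    have hMN : M ≤ N := Nat.le_of_lt_add_of_dvd (by omega) hdvd (dvd_mul_right _ _)
    have h4t : 4 * t ≤ M := Nat.le_of_lt_add_of_dvd (by omega) ⟨2, by ring⟩ hdvd
    have hM : 2 * cnt w 0 M = 2 * t + M :=
      two_mul_cnt_catalanConstruction_of_dvd hcs hdvd h4t hMN
    have hwindow := cnt_le_profile (n := N) (k := k) w (j := M - k) (by omega)
    rw [Nat.sub_add_cancel hkM] at hwindow
    have hsplit := cnt_add_cnt w (M - k).zero_le (Nat.sub_le M k)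
    rw [cnt_catalanConstruction t cs (M - k)] at hsplit
    have hstart := two_mul_cnt_flatten_le hcs (M - k - 4 * t)
    omega

lemma profile_catalanConstruction (hcs : ∀ c ∈ cs, IsCatalanSeq t c) {k : ℕ}
    (hk : k ≤ 2 * t * (cs.length + 2)) :
    profile (2 * t * (cs.length + 2)) (extL (catalanConstruction t cs)) k = min k (t + k / 2) :=
  le_antisymm
    (profile_le_of_two_mul_cnt_mem_Icc (two_mul_cnt_catalanConstruction_mem_Icc hcs) hk)
    (le_profile_catalanConstruction hcs hk)

end CatalanConstruction

theorem profile_of_catalan_construction_general (t : ℕ) (n : ℕ)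
    (hn : 4 * t ≤ n) (hdvd : 2 * t ∣ n) (cs : List (List Bool))
    (hlen : cs.length = (n - 4 * t) / (2 * t))
    (hcat : ∀ c ∈ cs, IsCatalanSeq t c) :
    ∀ k : ℕ, k ≤ n →
      profile n (extL ((List.replicate t [true, false]).flatten ++
          List.replicate (2 * t) true ++ cs.flatten)) k =
        min k (t + k / 2) := by
  have hn_eq : n = 2 * t * (cs.length + 2) := by
    have hmul := Nat.div_mul_cancel (Nat.dvd_sub hdvd ⟨2, by ring⟩ : 2 * t ∣ n - 4 * t)
    rw [← hlen, mul_comm] at hmul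
    rw [mul_add]
    omega
  subst hn_eq
  exact fun k hk => profile_catalanConstruction hcat hk

/-- Let `t ≥ 1`, let `n` be a multiple of `2t` with `n ≥ 4t`, and let
`w = (10)^t 1^{2t} c₁ c₂ ⋯ c_{(n-4t)/(2t)}` where each `cᵢ` is an arbitrary
Catalan sequence of length `2t`. Then the prefix normal form of `w` is
`1^{2t} (01)^{(n-2t)/2}`; equivalently, the profile of `w` satisfies
`f_w(k) = min (k, t + ⌊k/2⌋)` for all `0 ≤ k ≤ n`. -/
theorem profile_of_catalan_construction (t : ℕ) (ht : 1 ≤ t) (n : ℕ)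
    (hn : 4 * t ≤ n) (hdvd : 2 * t ∣ n) (cs : List (List Bool))
    (hlen : cs.length = (n - 4 * t) / (2 * t))
    (hcat : ∀ c ∈ cs, IsCatalanSeq t c) :
    ∀ k : ℕ, k ≤ n →
      profile n (extL ((List.replicate t [true, false]).flatten ++
          List.replicate (2 * t) true ++ cs.flatten)) k =
        min k (t + k / 2) :=
  profile_of_catalan_construction_general t n hn hdvd cs hlen hcat
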